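/- arXiv:cs/0403002 — 8 statements merged into one kernel-verified Lean document; each statement's English description precedes it below -/
import Mathlib

section
/- In an interlaced bilattice with truth-bottom f, if x ⊕ z ≤_t y then z ≤_k y ⊕ f, where ⊕ is knowledge join. -/
/-- A (complete, interlaced) bilattice: a carrier `B` with two partial orders,
the truth order `tle` and the knowledge order `kle`, each giving `B` the
structure of a complete lattice, such that all four binary lattice operations
are monotone with respect to both orderings (interlacing), and with `fbot`
the least element of the truth order. -/
structure Bilattice (B : Type*) where
  tle : B → B → Prop
  kle : B → B → Prop
  tle_refl : ∀ x, tle x x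
  tle_trans : ∀ {x y z}, tle x y → tle y z → tle x z
  tle_antisymm : ∀ {x y}, tle x y → tle y x → x = y
  kle_refl : ∀ x, kle x x
  kle_trans : ∀ {x y z}, kle x y → kle y z → kle x z
  kle_antisymm : ∀ {x y}, kle x y → kle y x → x = y
  tinf : B → B → B
  tsup : B → B → B
  kinf : B → B → B
  ksup : B → B → B
  tinf_le_left : ∀ x y, tle (tinf x y) x
  tinf_le_right : ∀ x y, tle (tinf x y) y
  le_tinf : ∀ {x y z}, tle z x → tle z y → tle z (tinf x y)
  le_tsup_left : ∀ x y, tle x (tsup x y)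
  le_tsup_right : ∀ x y, tle y (tsup x y)
  tsup_le : ∀ {x y z}, tle x z → tle y z → tle (tsup x y) z
  kinf_le_left : ∀ x y, kle (kinf x y) x
  kinf_le_right : ∀ x y, kle (kinf x y) y
  le_kinf : ∀ {x y z}, kle z x → kle z y → kle z (kinf x y)
  le_ksup_left : ∀ x y, kle x (ksup x y)
  le_ksup_right : ∀ x y, kle y (ksup x y)
  ksup_le : ∀ {x y z}, kle x z → kle y z → kle (ksup x y) z
  tSInf : Set B → B
  tSInf_le : ∀ S, ∀ x ∈ S, tle (tSInf S) x
  le_tSInf : ∀ S x, (∀ y ∈ S, tle x y) → tle x (tSInf S)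
  tSSup : Set B → B
  le_tSSup : ∀ S, ∀ x ∈ S, tle x (tSSup S)
  tSSup_le : ∀ S x, (∀ y ∈ S, tle y x) → tle (tSSup S) x
  kSInf : Set B → B
  kSInf_le : ∀ S, ∀ x ∈ S, kle (kSInf S) x
  le_kSInf : ∀ S x, (∀ y ∈ S, kle x y) → kle x (kSInf S)
  kSSup : Set B → B
  le_kSSup : ∀ S, ∀ x ∈ S, kle x (kSSup S)
  kSSup_le : ∀ S x, (∀ y ∈ S, kle y x) → kle (kSSup S) x
  fbot : B
  fbot_le : ∀ x, tle fbot x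
  tinf_mono_t : ∀ {x y x' y'}, tle x y → tle x' y' → tle (tinf x x') (tinf y y')
  tinf_mono_k : ∀ {x y x' y'}, kle x y → kle x' y' → kle (tinf x x') (tinf y y')
  tsup_mono_t : ∀ {x y x' y'}, tle x y → tle x' y' → tle (tsup x x') (tsup y y')
  tsup_mono_k : ∀ {x y x' y'}, kle x y → kle x' y' → kle (tsup x x') (tsup y y')
  kinf_mono_t : ∀ {x y x' y'}, tle x y → tle x' y' → tle (kinf x x') (kinf y y')
  kinf_mono_k : ∀ {x y x' y'}, kle x y → kle x' y' → kle (kinf x x') (kinf y y')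
  ksup_mono_t : ∀ {x y x' y'}, tle x y → tle x' y' → tle (ksup x x') (ksup y y')
  ksup_mono_k : ∀ {x y x' y'}, kle x y → kle x' y' → kle (ksup x x') (ksup y y')

/-- In an interlaced bilattice, `a ≤_t b ≤_t c` implies `b ≤_k a ⊕ c`. -/
lemma Bilattice.middle {B : Type*} (L : Bilattice B) {a b c : B}
    (hab : L.tle a b) (hbc : L.tle b c) : L.kle b (L.ksup a c) := by
  have hac : L.kle c (L.ksup a c) := L.le_ksup_right a c
  have h1 : L.ksup c (L.ksup a c) = L.ksup a c :=
    L.kle_antisymm (L.ksup_le hac (L.kle_refl _)) (L.le_ksup_right _ _)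
  have h2 : L.ksup a (L.ksup a c) = L.ksup a c :=
    L.kle_antisymm (L.ksup_le (L.le_ksup_left a c) (L.kle_refl _)) (L.le_ksup_right _ _)
  have hq1 : L.tle (L.ksup b (L.ksup a c)) (L.ksup a c) := by
    have := L.ksup_mono_t hbc (L.tle_refl (L.ksup a c))
    rwa [h1] at this
  have hq2 : L.tle (L.ksup a c) (L.ksup b (L.ksup a c)) := by
    have := L.ksup_mono_t hab (L.tle_refl (L.ksup a c))
    rwa [h2] at this
  have hq : L.ksup b (L.ksup a c) = L.ksup a c := L.tle_antisymm hq1 hq2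
  have := L.le_ksup_left b (L.ksup a c)
  rwa [hq] at this

/-- In an interlaced bilattice with truth-bottom f, if x ⊕ z ≤_t y then z ≤_k y ⊕ f. -/
theorem stmt_3 {B : Type*} (L : Bilattice B) (x y z : B)
    (h : L.tle (L.ksup x z) y) :
    L.kle z (L.ksup y L.fbot) := by
  have h1 : L.tle (L.ksup L.fbot z) y :=
    L.tle_trans (L.ksup_mono_t (L.fbot_le x) (L.tle_refl z)) h
  have h2 : L.kle (L.ksup L.fbot z) (L.ksup L.fbot y) :=
    L.middle (L.fbot_le _) h1
  have h3 : L.kle (L.ksup L.fbot y) (L.ksup y L.fbot) :=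
    L.ksup_le (L.le_ksup_right y L.fbot) (L.le_ksup_left y L.fbot)
  exact L.kle_trans (L.kle_trans (L.le_ksup_right L.fbot z) h2) h3
end

section
/- In an interlaced distributive bilattice with truth-bottom f, if f ⊗ y ≤_k x ≤_k f ⊕ y then x ≤_t y, where ⊗, ⊕ are knowledge meet and join. -/
/-- In an interlaced distributive bilattice with truth-bottom f,
if f ⊗ y ≤_k x ≤_k f ⊕ y then x ≤_t y. The distributivity hypotheses state
all distributive laws connecting ∧ (tinf), ∨ (tsup), ⊗ (kinf) and ⊕ (ksup). -/
theorem stmt_4 {B : Type*} (L : Bilattice B)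
    (hd1  : ∀ a b c : B, L.tinf a (L.tsup b c) = L.tsup (L.tinf a b) (L.tinf a c))
    (hd2  : ∀ a b c : B, L.tinf a (L.kinf b c) = L.kinf (L.tinf a b) (L.tinf a c))
    (hd3  : ∀ a b c : B, L.tinf a (L.ksup b c) = L.ksup (L.tinf a b) (L.tinf a c))
    (hd4  : ∀ a b c : B, L.tsup a (L.tinf b c) = L.tinf (L.tsup a b) (L.tsup a c))
    (hd5  : ∀ a b c : B, L.tsup a (L.kinf b c) = L.kinf (L.tsup a b) (L.tsup a c))
    (hd6  : ∀ a b c : B, L.tsup a (L.ksup b c) = L.ksup (L.tsup a b) (L.tsup a c))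
    (hd7  : ∀ a b c : B, L.kinf a (L.tinf b c) = L.tinf (L.kinf a b) (L.kinf a c))
    (hd8  : ∀ a b c : B, L.kinf a (L.tsup b c) = L.tsup (L.kinf a b) (L.kinf a c))
    (hd9  : ∀ a b c : B, L.kinf a (L.ksup b c) = L.ksup (L.kinf a b) (L.kinf a c))
    (hd10 : ∀ a b c : B, L.ksup a (L.tinf b c) = L.tinf (L.ksup a b) (L.ksup a c))
    (hd11 : ∀ a b c : B, L.ksup a (L.tsup b c) = L.tsup (L.ksup a b) (L.ksup a c))
    (hd12 : ∀ a b c : B, L.ksup a (L.kinf b c) = L.kinf (L.ksup a b) (L.ksup a c))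
    (x y : B)
    (h1 : L.kle (L.kinf L.fbot y) x) (h2 : L.kle x (L.ksup L.fbot y)) :
    L.tle x y := by
  -- idempotence / unit facts
  have htyy : L.tsup y y = y := L.tle_antisymm (L.tsup_le (L.tle_refl y) (L.tle_refl y)) (L.le_tsup_left y y)
  have htyf : L.tsup y L.fbot = y := L.tle_antisymm (L.tsup_le (L.tle_refl y) (L.fbot_le y)) (L.le_tsup_left y L.fbot)
  have hkyy : L.ksup y y = y := L.kle_antisymm (L.ksup_le (L.kle_refl y) (L.kle_refl y)) (L.le_ksup_left y y)
  have hkiyy : L.kinf y y = y := L.kle_antisymm (L.kinf_le_left y y) (L.le_kinf (L.kle_refl y) (L.kle_refl y))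
  -- from h2 : x = x ⊗ (f ⊕ y)
  have hx2 : L.kinf x (L.ksup L.fbot y) = x :=
    L.kle_antisymm (L.kinf_le_left _ _) (L.le_kinf (L.kle_refl x) h2)
  -- from h1 : x = (f ⊗ y) ⊕ x
  have hx1 : L.ksup (L.kinf L.fbot y) x = x :=
    L.kle_antisymm (L.ksup_le h1 (L.kle_refl x)) (L.le_ksup_right _ x)
  -- y ∨ (f ⊕ y) = y
  have hA : L.tsup y (L.ksup L.fbot y) = y := by
    rw [hd6, htyf, htyy, hkyy]
  -- y ∨ (f ⊗ y) = y
  have hB : L.tsup y (L.kinf L.fbot y) = y := by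
    rw [hd5, htyf, htyy, hkiyy]
  -- (y ∨ x) ≤_k y
  have hstep1 : L.kle (L.tsup y x) y := by
    have : L.tsup y x = L.kinf (L.tsup y x) y := by
      conv_lhs => rw [← hx2, hd5, hA]
    rw [this]; exact L.kinf_le_right _ _
  -- y ≤_k (y ∨ x)
  have hstep2 : L.kle y (L.tsup y x) := by
    have : L.tsup y x = L.ksup y (L.tsup y x) := by
      conv_lhs => rw [← hx1, hd6, hB]
    rw [this]; exact L.le_ksup_left _ _
  have : L.tsup y x = y := L.kle_antisymm hstep1 hstep2
  have hx := L.le_tsup_right y x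
  rwa [this] at hx
end

section
/- Given two complete lattices (L₁, ≤₁) and (L₂, ≤₂), the product L₁ × L₂ equipped with the orders ⟨x₁,x₂⟩ ≤_t ⟨y₁,y₂⟩ iff x₁ ≤₁ y₁ and y₂ ≤₂ x₂, and ⟨x₁,x₂⟩ ≤_k ⟨y₁,y₂⟩ iff x₁ ≤₁ y₁ and x₂ ≤₂ y₂, is a complete lattice under both ≤_t and ≤_k, and the meet and join of each order are monotone with respect to the other order (interlacing). -/
/-- `g` is a greatest lower bound of `S` with respect to the relation `le`. -/
def IsGlbRel {α : Type*} (le : α → α → Prop) (S : Set α) (g : α) : Prop :=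
  (∀ x ∈ S, le g x) ∧ ∀ l, (∀ x ∈ S, le l x) → le l g

/-- `u` is a least upper bound of `S` with respect to the relation `le`. -/
def IsLubRel {α : Type*} (le : α → α → Prop) (S : Set α) (u : α) : Prop :=
  (∀ x ∈ S, le x u) ∧ ∀ v, (∀ x ∈ S, le x v) → le u v

/-- Ginsberg's product construction L₁ ⊙ L₂: the product of two complete
lattices, with ⟨x₁,x₂⟩ ≤_t ⟨y₁,y₂⟩ iff x₁ ≤ y₁ and y₂ ≤ x₂, and
⟨x₁,x₂⟩ ≤_k ⟨y₁,y₂⟩ iff x₁ ≤ y₁ and x₂ ≤ y₂, is a complete lattice under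
both orders, and the binary meets/joins of each order are monotone with
respect to both orders (interlacing). -/
theorem stmt_6 {L₁ L₂ : Type*} [CompleteLattice L₁] [CompleteLattice L₂]
    (tle kle : L₁ × L₂ → L₁ × L₂ → Prop)
    (htle : ∀ p q, tle p q ↔ p.1 ≤ q.1 ∧ q.2 ≤ p.2)
    (hkle : ∀ p q, kle p q ↔ p.1 ≤ q.1 ∧ p.2 ≤ q.2)
    (tinf tsup kinf ksup : L₁ × L₂ → L₁ × L₂ → L₁ × L₂)
    (htinf : ∀ p q, tinf p q = (p.1 ⊓ q.1, p.2 ⊔ q.2))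
    (htsup : ∀ p q, tsup p q = (p.1 ⊔ q.1, p.2 ⊓ q.2))
    (hkinf : ∀ p q, kinf p q = (p.1 ⊓ q.1, p.2 ⊓ q.2))
    (hksup : ∀ p q, ksup p q = (p.1 ⊔ q.1, p.2 ⊔ q.2)) :
    -- both orders are partial orders
    ((∀ p, tle p p) ∧ (∀ p q r, tle p q → tle q r → tle p r) ∧
      (∀ p q, tle p q → tle q p → p = q)) ∧
    ((∀ p, kle p p) ∧ (∀ p q r, kle p q → kle q r → kle p r) ∧
      (∀ p q, kle p q → kle q p → p = q)) ∧
    -- both orders are complete: every subset has a lub and a glb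
    (∀ S : Set (L₁ × L₂), ∃ u, IsLubRel tle S u) ∧
    (∀ S : Set (L₁ × L₂), ∃ g, IsGlbRel tle S g) ∧
    (∀ S : Set (L₁ × L₂), ∃ u, IsLubRel kle S u) ∧
    (∀ S : Set (L₁ × L₂), ∃ g, IsGlbRel kle S g) ∧
    -- the binary operations are the meets and joins of the two orders
    (∀ p q, IsGlbRel tle {p, q} (tinf p q)) ∧
    (∀ p q, IsLubRel tle {p, q} (tsup p q)) ∧
    (∀ p q, IsGlbRel kle {p, q} (kinf p q)) ∧
    (∀ p q, IsLubRel kle {p, q} (ksup p q)) ∧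
    -- interlacing: each operation is monotone with respect to both orders
    (∀ p q p' q', tle p q → tle p' q' → tle (tinf p p') (tinf q q')) ∧
    (∀ p q p' q', kle p q → kle p' q' → kle (tinf p p') (tinf q q')) ∧
    (∀ p q p' q', tle p q → tle p' q' → tle (tsup p p') (tsup q q')) ∧
    (∀ p q p' q', kle p q → kle p' q' → kle (tsup p p') (tsup q q')) ∧
    (∀ p q p' q', tle p q → tle p' q' → tle (kinf p p') (kinf q q')) ∧
    (∀ p q p' q', kle p q → kle p' q' → kle (kinf p p') (kinf q q')) ∧
    (∀ p q p' q', tle p q → tle p' q' → tle (ksup p p') (ksup q q')) ∧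
    (∀ p q p' q', kle p q → kle p' q' → kle (ksup p p') (ksup q q')) := by
  simp only [IsGlbRel, IsLubRel, htle, hkle, htinf, htsup, hkinf, hksup]
  refine ⟨⟨?_, ?_, ?_⟩, ⟨?_, ?_, ?_⟩, ?_, ?_, ?_, ?_, ?_, ?_, ?_, ?_,
    ?_, ?_, ?_, ?_, ?_, ?_, ?_, ?_⟩
  · exact fun p => ⟨le_refl _, le_refl _⟩
  · exact fun p q r h1 h2 => ⟨h1.1.trans h2.1, h2.2.trans h1.2⟩
  · exact fun p q h1 h2 => Prod.ext (le_antisymm h1.1 h2.1) (le_antisymm h2.2 h1.2)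
  · exact fun p => ⟨le_refl _, le_refl _⟩
  · exact fun p q r h1 h2 => ⟨h1.1.trans h2.1, h1.2.trans h2.2⟩
  · exact fun p q h1 h2 => Prod.ext (le_antisymm h1.1 h2.1) (le_antisymm h1.2 h2.2)
  · intro S
    refine ⟨(⨆ p ∈ S, p.1, ⨅ p ∈ S, p.2), fun x hx => ⟨?_, ?_⟩, fun v hv => ⟨?_, ?_⟩⟩
    · exact le_iSup₂ (f := fun p (_ : p ∈ S) => p.1) x hx
    · exact iInf₂_le (f := fun p (_ : p ∈ S) => p.2) x hx
    · exact iSup₂_le fun x hx => (hv x hx).1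
    · exact le_iInf₂ fun x hx => (hv x hx).2
  · intro S
    refine ⟨(⨅ p ∈ S, p.1, ⨆ p ∈ S, p.2), fun x hx => ⟨?_, ?_⟩, fun l hl => ⟨?_, ?_⟩⟩
    · exact iInf₂_le (f := fun p (_ : p ∈ S) => p.1) x hx
    · exact le_iSup₂ (f := fun p (_ : p ∈ S) => p.2) x hx
    · exact le_iInf₂ fun x hx => (hl x hx).1
    · exact iSup₂_le fun x hx => (hl x hx).2
  · intro S
    refine ⟨(⨆ p ∈ S, p.1, ⨆ p ∈ S, p.2), fun x hx => ⟨?_, ?_⟩, fun v hv => ⟨?_, ?_⟩⟩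
    · exact le_iSup₂ (f := fun p (_ : p ∈ S) => p.1) x hx
    · exact le_iSup₂ (f := fun p (_ : p ∈ S) => p.2) x hx
    · exact iSup₂_le fun x hx => (hv x hx).1
    · exact iSup₂_le fun x hx => (hv x hx).2
  · intro S
    refine ⟨(⨅ p ∈ S, p.1, ⨅ p ∈ S, p.2), fun x hx => ⟨?_, ?_⟩, fun l hl => ⟨?_, ?_⟩⟩
    · exact iInf₂_le (f := fun p (_ : p ∈ S) => p.1) x hx
    · exact iInf₂_le (f := fun p (_ : p ∈ S) => p.2) x hx
    · exact le_iInf₂ fun x hx => (hl x hx).1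
    · exact le_iInf₂ fun x hx => (hl x hx).2
  · intro p q
    refine ⟨?_, fun l hl => ⟨le_inf (hl p (Or.inl rfl)).1 (hl q (Or.inr rfl)).1,
      sup_le (hl p (Or.inl rfl)).2 (hl q (Or.inr rfl)).2⟩⟩
    rintro x (rfl | rfl)
    · exact ⟨inf_le_left, le_sup_left⟩
    · exact ⟨inf_le_right, le_sup_right⟩
  · intro p q
    refine ⟨?_, fun v hv => ⟨sup_le (hv p (Or.inl rfl)).1 (hv q (Or.inr rfl)).1,
      le_inf (hv p (Or.inl rfl)).2 (hv q (Or.inr rfl)).2⟩⟩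
    rintro x (rfl | rfl)
    · exact ⟨le_sup_left, inf_le_left⟩
    · exact ⟨le_sup_right, inf_le_right⟩
  · intro p q
    refine ⟨?_, fun l hl => ⟨le_inf (hl p (Or.inl rfl)).1 (hl q (Or.inr rfl)).1,
      le_inf (hl p (Or.inl rfl)).2 (hl q (Or.inr rfl)).2⟩⟩
    rintro x (rfl | rfl)
    · exact ⟨inf_le_left, inf_le_left⟩
    · exact ⟨inf_le_right, inf_le_right⟩
  · intro p q
    refine ⟨?_, fun v hv => ⟨sup_le (hv p (Or.inl rfl)).1 (hv q (Or.inr rfl)).1,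
      sup_le (hv p (Or.inl rfl)).2 (hv q (Or.inr rfl)).2⟩⟩
    rintro x (rfl | rfl)
    · exact ⟨le_sup_left, le_sup_left⟩
    · exact ⟨le_sup_right, le_sup_right⟩
  · exact fun p q p' q' h h' => ⟨inf_le_inf h.1 h'.1, sup_le_sup h.2 h'.2⟩
  · exact fun p q p' q' h h' => ⟨inf_le_inf h.1 h'.1, sup_le_sup h.2 h'.2⟩
  · exact fun p q p' q' h h' => ⟨sup_le_sup h.1 h'.1, inf_le_inf h.2 h'.2⟩
  · exact fun p q p' q' h h' => ⟨sup_le_sup h.1 h'.1, inf_le_inf h.2 h'.2⟩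
  · exact fun p q p' q' h h' => ⟨inf_le_inf h.1 h'.1, inf_le_inf h.2 h'.2⟩
  · exact fun p q p' q' h h' => ⟨inf_le_inf h.1 h'.1, inf_le_inf h.2 h'.2⟩
  · exact fun p q p' q' h h' => ⟨sup_le_sup h.1 h'.1, sup_le_sup h.2 h'.2⟩
  · exact fun p q p' q' h h' => ⟨sup_le_sup h.1 h'.1, sup_le_sup h.2 h'.2⟩
end

section
/- With the setup of the support iteration (J₀ = f the ≤_t-bottom, J_{i+1} = f ⊓_k Φ(I ⊔_k J_i), Φ being ≤_k-monotone, in an interlaced bilattice), the sequence J_i is monotone non-decreasing under the truth order ≤_t. -/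
/-!
The iteration is `≤ₖ`-decreasing, being a transfinite iteration of a `≤ₖ`-monotone map
started at a point its first step lies below; in particular every `Jᵢ` lies `≤ₖ`-below
`J₀ = f`. Below `f`, interlacing turns `≤ₖ` into reversed `≤ₜ`.
-/

namespace Bilattice

variable {B : Type*} (L : Bilattice B)

theorem kinf_eq_left {x y : B} (h : L.kle x y) : L.kinf x y = x :=
  L.kle_antisymm (L.kinf_le_left x y) (L.le_kinf (L.kle_refl x) h)

theorem kinf_eq_right {x y : B} (h : L.kle y x) : L.kinf x y = y :=
  L.kle_antisymm (L.kinf_le_right x y) (L.le_kinf h (L.kle_refl y))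

/-- `y = f ⊓ₖ y ≤ₜ x ⊓ₖ y = x` by interlacing, since `f ≤ₜ x`. -/
theorem tle_of_kle_of_kle_fbot {x y : B} (hxy : L.kle x y) (hy : L.kle y L.fbot) :
    L.tle y x := by
  have h := L.kinf_mono_t (L.fbot_le x) (L.tle_refl y)
  rwa [L.kinf_eq_right hy, L.kinf_eq_left hxy] at h

open Order in
theorem kle_of_le_of_transfinite_iterate {g : B → B}
    (hg : ∀ {x y : B}, L.kle x y → L.kle (g x) (g y)) {J : Ordinal → B}
    (hstart : L.kle (g (J 0)) (J 0)) (hsucc : ∀ i, J (succ i) = g (J i))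
    (hlim : ∀ l : Ordinal, IsSuccLimit l → J l = L.kSInf (J '' Set.Iio l)) {i j : Ordinal}
    (hij : i ≤ j) : L.kle (J j) (J i) := by
  induction j using WellFoundedLT.induction generalizing i with
  | _ j ih =>
  rcases hij.eq_or_lt with rfl | hij
  · exact L.kle_refl _
  rcases Ordinal.zero_or_succ_or_isSuccLimit j with rfl | ⟨k, rfl⟩ | hj
  · exact absurd hij (not_lt_zero (a := i))
  · have step : L.kle (J (succ k)) (J k) := by
      rcases Ordinal.zero_or_succ_or_isSuccLimit k with rfl | ⟨m, rfl⟩ | hk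
      · rwa [hsucc]
      · have h := hg (ih (succ m) (lt_succ _) (le_succ m))
        rwa [← hsucc, ← hsucc] at h
      · rw [hlim k hk]
        refine L.le_kSInf _ _ ?_
        rintro _ ⟨p, hp, rfl⟩
        have hkp : L.kle (J (succ k)) (J (succ p)) := by
          rw [hsucc, hsucc]
          exact hg (ih k (lt_succ k) hp.le)
        exact L.kle_trans hkp (ih (succ p) (succ_lt_succ hp) (le_succ p))
    exact L.kle_trans step (ih k (lt_succ k) (lt_succ_iff.mp hij))
  · rw [hlim j hj]
    exact L.kSInf_le _ _ ⟨i, hij, rfl⟩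

end Bilattice

open Ordinal in
/-- The support iteration J₀ = f (the ≤_t-bottom), J_{i+1} = f ⊗ Φ(I ⊕ J_i)
(with knowledge meets at limit ordinals), for a ≤_k-monotone Φ in an
interlaced bilattice, is monotone non-decreasing under the truth order ≤_t. -/
theorem stmt_10 {B : Type*} (L : Bilattice B)
    (Φ : B → B) (hΦ : ∀ {x y : B}, L.kle x y → L.kle (Φ x) (Φ y))
    (I : B) (J : Ordinal → B)
    (h0 : J 0 = L.fbot)
    (hsucc : ∀ i : Ordinal, J (Order.succ i) = L.kinf L.fbot (Φ (L.ksup I (J i))))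
    (hlim : ∀ l : Ordinal, Order.IsSuccLimit l → J l = L.kSInf (J '' Set.Iio l)) :
    ∀ i j : Ordinal, i ≤ j → L.tle (J i) (J j) := by
  have hanti : ∀ {i j : Ordinal}, i ≤ j → L.kle (J j) (J i) :=
    L.kle_of_le_of_transfinite_iterate (g := fun x => L.kinf L.fbot (Φ (L.ksup I x)))
      (fun h => L.kinf_mono_k (L.kle_refl _) (hΦ (L.ksup_mono_k (L.kle_refl _) h)))
      (h0 ▸ L.kinf_le_left _ _) hsucc hlim
  intro i j hij
  exact L.tle_of_kle_of_kle_fbot (hanti hij) (h0 ▸ hanti (zero_le (a := i)))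
end

section
/- The support operator is ≤_k-monotone: if I ≤_k I' then S(I) ≤_k S(I'), where S(I) is the ≤_k-greatest element J satisfying J ≤_k f and J ≤_k Φ(I ⊕ J), for a ≤_k-monotone Φ. -/
/-- The support operator is ≤_k-monotone: if I ≤_k I' then S(I) ≤_k S(I'),
where S(I) is the ≤_k-greatest J with J ≤_k f and J ≤_k Φ(I ⊕ J). -/
theorem stmt_12 {B : Type*} (L : Bilattice B)
    (Φ : B → B) (hΦ : ∀ {x y : B}, L.kle x y → L.kle (Φ x) (Φ y))
    (I I' SI SI' : B)
    (hSI : (L.kle SI L.fbot ∧ L.kle SI (Φ (L.ksup I SI))) ∧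
      ∀ J, (L.kle J L.fbot ∧ L.kle J (Φ (L.ksup I J))) → L.kle J SI)
    (hSI' : (L.kle SI' L.fbot ∧ L.kle SI' (Φ (L.ksup I' SI'))) ∧
      ∀ J, (L.kle J L.fbot ∧ L.kle J (Φ (L.ksup I' J))) → L.kle J SI')
    (hII' : L.kle I I') :
    L.kle SI SI' := by
  exact hSI'.2 SI ⟨hSI.1.1, L.kle_trans hSI.1.2 (hΦ (L.ksup_mono_k hII' (L.kle_refl SI)))⟩
end

section
/- If I ≤_k J in an interlaced bilattice, then S(J) ≤_t S(I), where S is the support operator (the ≤_k-greatest element X with X ≤_k f and X ≤_k Φ(· ⊕ X)) for a ≤_k-monotone Φ. -/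
/-- In an interlaced bilattice, if I ≤_k J then S(J) ≤_t S(I), where S is the
support operator: S(I) is the ≤_k-greatest X with X ≤_k f and X ≤_k Φ(I ⊕ X),
for a ≤_k-monotone Φ. -/
theorem stmt_13 {B : Type*} (L : Bilattice B)
    (Φ : B → B) (hΦ : ∀ {x y : B}, L.kle x y → L.kle (Φ x) (Φ y))
    (I J SI SJ : B)
    (hSI : (L.kle SI L.fbot ∧ L.kle SI (Φ (L.ksup I SI))) ∧
      ∀ X, (L.kle X L.fbot ∧ L.kle X (Φ (L.ksup I X))) → L.kle X SI)
    (hSJ : (L.kle SJ L.fbot ∧ L.kle SJ (Φ (L.ksup J SJ))) ∧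
      ∀ X, (L.kle X L.fbot ∧ L.kle X (Φ (L.ksup J X))) → L.kle X SJ)
    (hIJ : L.kle I J) :
    L.tle SJ SI := by

  obtain ⟨⟨hSIf, hSIΦ⟩, hSImax⟩ := hSI
  obtain ⟨⟨hSJf, hSJΦ⟩, hSJmax⟩ := hSJ
  -- SI is a candidate for J, hence SI ≤_k SJ
  have hcand : L.kle SI (Φ (L.ksup J SI)) :=
    L.kle_trans hSIΦ (hΦ (L.ksup_mono_k hIJ (L.kle_refl SI)))
  have hk : L.kle SI SJ := hSJmax SI ⟨hSIf, hcand⟩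
  -- x ≤_k y ≤_k f ⇒ y ≤_t x
  have h1 : SI = L.kinf SI SJ :=
    L.kle_antisymm (L.le_kinf (L.kle_refl SI) hk) (L.kinf_le_left SI SJ)
  have h2 : SJ = L.kinf L.fbot SJ :=
    L.kle_antisymm (L.le_kinf hSJf (L.kle_refl SJ)) (L.kinf_le_right L.fbot SJ)
  have := L.kinf_mono_t (L.fbot_le SI) (L.tle_refl SJ)
  rw [← h1, ← h2] at this
  exact this
end

section
/- Let Φ be a ≤_k-monotone operator on a bilattice, I an element, and S(I) its support (the ≤_k-greatest J with J ≤_k f and J ≤_k Φ(I ⊕ J)). Then the following are equivalent: (1) I = Φ(I) and S(I) ≤_k I; (2) I = Φ(I) ⊕ S(I); (3) I = Φ(I ⊕ S(I)). -/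
/-- For a ≤_k-monotone Φ with support S(I) (the ≤_k-greatest J with J ≤_k f
and J ≤_k Φ(I ⊕ J)), the following are equivalent:
(1) I = Φ(I) and S(I) ≤_k I; (2) I = Φ(I) ⊕ S(I); (3) I = Φ(I ⊕ S(I)). -/
theorem stmt_14 {B : Type*} (L : Bilattice B)
    (Φ : B → B) (hΦ : ∀ {x y : B}, L.kle x y → L.kle (Φ x) (Φ y))
    (I SI : B)
    (hSI : (L.kle SI L.fbot ∧ L.kle SI (Φ (L.ksup I SI))) ∧
      ∀ J, (L.kle J L.fbot ∧ L.kle J (Φ (L.ksup I J))) → L.kle J SI) :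
    ((I = Φ I ∧ L.kle SI I) ↔ I = L.ksup (Φ I) SI) ∧
    (I = L.ksup (Φ I) SI ↔ I = Φ (L.ksup I SI)) := by
  obtain ⟨⟨_, hsafe⟩, _⟩ := hSI
  have h12 : (I = Φ I ∧ L.kle SI I) → I = L.ksup (Φ I) SI := by
    rintro ⟨hfix, hle⟩
    have : L.ksup I SI = I :=
      L.kle_antisymm (L.ksup_le (L.kle_refl I) hle) (L.le_ksup_left I SI)
    nth_rewrite 1 [hfix] at this
    exact this.symm
  have h23 : I = L.ksup (Φ I) SI → I = Φ (L.ksup I SI) := by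
    intro h2
    have hSII : L.kle SI I := L.kle_trans (L.le_ksup_right (Φ I) SI) (h2 ▸ L.kle_refl I)
    have hIeq : L.ksup I SI = I :=
      L.kle_antisymm (L.ksup_le (L.kle_refl I) hSII) (L.le_ksup_left I SI)
    have hSΦ : L.kle SI (Φ I) := by rw [← hIeq]; exact hsafe
    have hfix : I = Φ I :=
      h2.trans (L.kle_antisymm (L.ksup_le (L.kle_refl _) hSΦ) (L.le_ksup_left _ _))
    rw [hIeq]; exact hfix
  have h31 : I = Φ (L.ksup I SI) → (I = Φ I ∧ L.kle SI I) := by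
    intro h3
    have hSII : L.kle SI I := h3 ▸ hsafe
    have hIeq : L.ksup I SI = I :=
      L.kle_antisymm (L.ksup_le (L.kle_refl I) hSII) (L.le_ksup_left I SI)
    rw [hIeq] at h3
    exact ⟨h3, hSII⟩
  exact ⟨⟨h12, fun h => h31 (h23 h)⟩, ⟨h23, fun h => h12 (h31 h)⟩⟩
end

section
/- Let Φ be ≤_k-monotone on a bilattice, I an element with support S(I), and Φ'(I) the limit of K₀ = S(I), K_{i+1} = Φ(K_i) ⊕ K_i. If K is any element satisfying K = Φ(K) ⊕ S(I), then Φ'(I) ≤_k K. That is, Φ'(I) is a ≤_k-lower bound of all fixed-points of the S(I)-completed operator. -/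
namespace Bilattice

variable {B : Type*} (L : Bilattice B)

theorem ksup_kle_iff {x y z : B} : L.kle (L.ksup x y) z ↔ L.kle x z ∧ L.kle y z :=
  ⟨fun h => ⟨L.kle_trans (L.le_ksup_left x y) h, L.kle_trans (L.le_ksup_right x y) h⟩,
    fun h => L.ksup_le h.1 h.2⟩

theorem iterate_kle_of_prefixed {Φ : B → B} (hΦ : ∀ {x y : B}, L.kle x y → L.kle (Φ x) (Φ y))
    {K : Ordinal → B}
    (hsucc : ∀ i : Ordinal, K (Order.succ i) = L.ksup (Φ (K i)) (K i))
    (hlim : ∀ l : Ordinal, Order.IsSuccLimit l → K l = L.kSSup (K '' Set.Iio l))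
    {b : B} (h0 : L.kle (K 0) b) (hb : L.kle (Φ b) b) (i : Ordinal) : L.kle (K i) b := by
  induction i using WellFoundedLT.induction with
  | _ i ih =>
    rcases Ordinal.zero_or_succ_or_isSuccLimit i with rfl | ⟨j, rfl⟩ | hi
    · exact h0
    · have hj : L.kle (K j) b := ih j (Order.lt_succ j)
      rw [hsucc]
      exact L.ksup_le (L.kle_trans (hΦ hj) hb) hj
    · rw [hlim i hi]
      refine L.kSSup_le _ _ ?_
      rintro _ ⟨j, hj, rfl⟩
      exact ih j hj

end Bilattice

open Ordinal in
theorem stmt_17_general {B : Type*} (L : Bilattice B)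
    (Φ : B → B) (hΦ : ∀ {x y : B}, L.kle x y → L.kle (Φ x) (Φ y))
    (SI : B)
    (K : Ordinal → B)
    (h0 : K 0 = SI)
    (hsucc : ∀ i : Ordinal, K (Order.succ i) = L.ksup (Φ (K i)) (K i))
    (hlim : ∀ l : Ordinal, Order.IsSuccLimit l → K l = L.kSSup (K '' Set.Iio l))
    (Kfix : B) (hKfix : Kfix = L.ksup (Φ Kfix) SI) :
    ∀ i : Ordinal, L.kle (K i) Kfix := by
  have hKfix_le : L.kle (L.ksup (Φ Kfix) SI) Kfix := by
    rw [← hKfix]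
    exact L.kle_refl Kfix
  obtain ⟨hΦKfix, hSIKfix⟩ := L.ksup_kle_iff.1 hKfix_le
  exact L.iterate_kle_of_prefixed hΦ hsucc hlim (h0 ▸ hSIKfix) hΦKfix

open Ordinal in
/-- For ≤_k-monotone Φ, I with support SI, and the iteration K₀ = SI,
K_{i+1} = Φ(K_i) ⊕ K_i (knowledge joins at limits) whose limit is Φ'(I):
if Kfix satisfies Kfix = Φ(Kfix) ⊕ SI then every iterate (hence the limit
Φ'(I)) is ≤_k Kfix; i.e. Φ'(I) is a ≤_k-lower bound of all fixed points of
the SI-completed operator. -/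
theorem stmt_17 {B : Type*} (L : Bilattice B)
    (Φ : B → B) (hΦ : ∀ {x y : B}, L.kle x y → L.kle (Φ x) (Φ y))
    (I SI : B)
    (hSI : (L.kle SI L.fbot ∧ L.kle SI (Φ (L.ksup I SI))) ∧
      ∀ J, (L.kle J L.fbot ∧ L.kle J (Φ (L.ksup I J))) → L.kle J SI)
    (K : Ordinal → B)
    (h0 : K 0 = SI)
    (hsucc : ∀ i : Ordinal, K (Order.succ i) = L.ksup (Φ (K i)) (K i))
    (hlim : ∀ l : Ordinal, Order.IsSuccLimit l → K l = L.kSSup (K '' Set.Iio l))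
    (Kfix : B) (hKfix : Kfix = L.ksup (Φ Kfix) SI) :
    ∀ i : Ordinal, L.kle (K i) Kfix :=
  stmt_17_general L Φ hΦ SI K h0 hsucc hlim Kfix hKfix
end
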